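/- arXiv:2002.03172 — 5 statements merged into one kernel-verified Lean document; each statement's English description precedes it below -/
import Mathlib

section
/- Let n ≥ 1, let L₁, L₂ : ℝⁿ → ℝ be linear maps, let Q : ℝⁿ → ℝ be a quadratic form, and let c₁, c₂, k be real numbers. If the only x ∈ ℝⁿ satisfying L₁(x) = 0, L₂(x) = 0 and Q(x) = 0 is x = 0, then the set of integer points x ∈ ℤⁿ satisfying L₁(x) = c₁, L₂(x) = c₂ and Q(x) = k is finite. -/
open Filter Topology

/-- A quadratic form on a finite-dimensional real space is continuous. -/
lemma quadraticForm_continuous (n : ℕ) (Q : QuadraticForm ℝ (Fin n → ℝ)) :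
    Continuous fun x : Fin n → ℝ => Q x := by
  classical
  set B := QuadraticMap.associated (R := ℝ) Q with hB
  have hBx : ∀ x : Fin n → ℝ, B x x = Q x := fun x =>
    QuadraticMap.associated_eq_self_apply ℝ Q x
  -- turn B into a continuous bilinear map
  let B' : (Fin n → ℝ) →ₗ[ℝ] ((Fin n → ℝ) →L[ℝ] ℝ) :=
    { toFun := fun x => (B x).toContinuousLinearMap
      map_add' := by intro a b; ext v; simp
      map_smul' := by intro a b; ext v; simp }
  have hB'cont : Continuous B' := B'.continuous_of_finiteDimensional
  have : Continuous fun x : Fin n → ℝ => B' x x := by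
    have h2 : Continuous fun p : ((Fin n → ℝ) →L[ℝ] ℝ) × (Fin n → ℝ) => p.1 p.2 :=
      isBoundedBilinearMap_apply.continuous
    exact h2.comp (hB'cont.prodMk continuous_id)
  simpa only [show ∀ x, B' x x = Q x from fun x => hBx x] using this

/-- If the homogeneous real system `L₁ = 0, L₂ = 0, Q = 0` (two linear maps and a
quadratic form on `ℝⁿ`) has only the trivial solution, then the inhomogeneous system
`L₁ = c₁, L₂ = c₂, Q = k` has only finitely many integer solutions. -/
theorem integer_solutions_finite_of_homogeneous_trivial (n : ℕ) (hn : 1 ≤ n)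
    (L₁ L₂ : (Fin n → ℝ) →ₗ[ℝ] ℝ) (Q : QuadraticForm ℝ (Fin n → ℝ)) (c₁ c₂ k : ℝ)
    (h : ∀ x : Fin n → ℝ, L₁ x = 0 → L₂ x = 0 → Q x = 0 → x = 0) :
    {x : Fin n → ℤ | L₁ (fun i => (x i : ℝ)) = c₁ ∧ L₂ (fun i => (x i : ℝ)) = c₂ ∧
      Q (fun i => (x i : ℝ)) = k}.Finite := by
  -- Step 1: real solutions are bounded in norm.
  obtain ⟨C, hC⟩ : ∃ C : ℝ, ∀ x : Fin n → ℝ, L₁ x = c₁ → L₂ x = c₂ → Q x = k → ‖x‖ ≤ C := by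
    by_contra hc
    push_neg at hc
    choose x h1 h2 h3 h4 using fun m : ℕ => hc m
    have hpos : ∀ m : ℕ, 0 < ‖x m‖ := fun m =>
      lt_of_le_of_lt (by positivity) (h4 m)
    set y : ℕ → (Fin n → ℝ) := fun m => ‖x m‖⁻¹ • x m with hy
    have hysphere : ∀ m, y m ∈ Metric.sphere (0 : Fin n → ℝ) 1 := by
      intro m
      simp [hy, mem_sphere_iff_norm, norm_smul, abs_of_pos (hpos m),
        inv_mul_cancel₀ (hpos m).ne']
    obtain ⟨z, hz, φ, hφ, hlim⟩ :=
      (isCompact_sphere (0 : Fin n → ℝ) 1).tendsto_subseq hysphere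
    have hznorm : ‖z‖ = 1 := by simpa [mem_sphere_iff_norm] using hz
    have htends : Tendsto (fun m => ‖x (φ m)‖) atTop atTop := by
      apply tendsto_atTop_mono (fun m => (h4 (φ m)).le.trans' ?_)
        tendsto_natCast_atTop_atTop
      exact_mod_cast hφ.le_apply
    have hinv : Tendsto (fun m => ‖x (φ m)‖⁻¹) atTop (𝓝 0) :=
      htends.inv_tendsto_atTop
    -- L₁ z = 0
    have hL₁ : L₁ z = 0 := by
      have e1 : Tendsto (fun m => L₁ (y (φ m))) atTop (𝓝 (L₁ z)) :=
        (L₁.continuous_of_finiteDimensional.tendsto z).comp hlim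
      have e2 : Tendsto (fun m => L₁ (y (φ m))) atTop (𝓝 0) := by
        have : (fun m => L₁ (y (φ m))) = fun m => ‖x (φ m)‖⁻¹ * c₁ := by
          funext m; simp [hy, map_smul, h1, smul_eq_mul]
        rw [this]
        simpa using hinv.mul_const c₁
      exact tendsto_nhds_unique e1 e2
    have hL₂ : L₂ z = 0 := by
      have e1 : Tendsto (fun m => L₂ (y (φ m))) atTop (𝓝 (L₂ z)) :=
        (L₂.continuous_of_finiteDimensional.tendsto z).comp hlim
      have e2 : Tendsto (fun m => L₂ (y (φ m))) atTop (𝓝 0) := by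
        have : (fun m => L₂ (y (φ m))) = fun m => ‖x (φ m)‖⁻¹ * c₂ := by
          funext m; simp [hy, map_smul, h2, smul_eq_mul]
        rw [this]
        simpa using hinv.mul_const c₂
      exact tendsto_nhds_unique e1 e2
    have hQ : Q z = 0 := by
      have e1 : Tendsto (fun m => Q (y (φ m))) atTop (𝓝 (Q z)) :=
        ((quadraticForm_continuous n Q).tendsto z).comp hlim
      have e2 : Tendsto (fun m => Q (y (φ m))) atTop (𝓝 0) := by
        have : (fun m => Q (y (φ m))) = fun m => (‖x (φ m)‖⁻¹ * ‖x (φ m)‖⁻¹) * k := by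
          funext m; simp [hy, QuadraticMap.map_smul, h3, smul_eq_mul]
        rw [this]
        simpa using ((hinv.mul hinv).mul_const k)
      exact tendsto_nhds_unique e1 e2
    have : z = 0 := h z hL₁ hL₂ hQ
    rw [this, norm_zero] at hznorm
    norm_num at hznorm
  -- Step 2: bounded integer points form a finite set.
  apply Set.Finite.subset (Set.finite_Icc (fun _ : Fin n => -⌈C⌉) (fun _ : Fin n => ⌈C⌉))
  rintro x ⟨hx1, hx2, hx3⟩
  have hxn : ‖(fun i => (x i : ℝ))‖ ≤ C := hC _ hx1 hx2 hx3
  have hxi : ∀ i, |(x i : ℝ)| ≤ C := by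
    intro i
    calc |(x i : ℝ)| = ‖(fun j => (x j : ℝ)) i‖ := by simp
      _ ≤ ‖(fun j => (x j : ℝ))‖ := by exact norm_le_pi_norm (fun j => ((x j : ℝ))) i
      _ ≤ C := hxn
  constructor <;> intro i
  · have := (abs_le.mp (hxi i)).1
    have h2 : (-⌈C⌉ : ℝ) ≤ (x i : ℝ) := le_trans (by
      simpa using neg_le_neg (Int.le_ceil C)) this
    exact_mod_cast h2
  · have := (abs_le.mp (hxi i)).2
    have h2 : ((x i : ℝ)) ≤ (⌈C⌉ : ℝ) := le_trans this (Int.le_ceil C)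
    exact_mod_cast h2
end

section
/- Let a, b, r, k be integers with a ≥ 1 and b ≥ 1. Then the set of triples (γ, δ, τ) ∈ ℤ³ satisfying δ + τ − γ = r, γ·a·b = δ·a·(b−1) + τ·b·(a−1), and γ² + δ² + τ² − 2γδ − 2γτ = k is finite. -/
/-- The system of equations satisfied by the dimension vector `(γ, δ, τ)` of the
`S₄`-quiver representation of an Ulrich bundle of rank `r` on `(ℙ¹ × ℙ¹, O(a,b))`
has only finitely many integer solutions. -/
theorem p1xp1_dimension_vectors_finite (a b r k : ℤ) (ha : 1 ≤ a) (hb : 1 ≤ b) :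
    {p : ℤ × ℤ × ℤ |
      p.2.1 + p.2.2 - p.1 = r ∧
      p.1 * a * b = p.2.1 * a * (b - 1) + p.2.2 * b * (a - 1) ∧
      p.1 ^ 2 + p.2.1 ^ 2 + p.2.2 ^ 2 - 2 * p.1 * p.2.1 - 2 * p.1 * p.2.2 = k}.Finite := by
  set B : ℤ := |r ^ 2 - k| + |r * a * b| with hBdef
  have hB0 : 0 ≤ B := add_nonneg (abs_nonneg _) (abs_nonneg _)
  apply Set.Finite.subset
    (((Set.finite_Icc (-(2 * B + |r|)) (2 * B + |r|)).prod
      ((Set.finite_Icc (-B) B).prod (Set.finite_Icc (-B) B))))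
  rintro ⟨g, d, t⟩ ⟨h1, h2, h3⟩
  simp only [Set.mem_setOf_eq] at h1 h2 h3
  have hl : a * d + b * t = r * a * b := by linear_combination a * b * h1 + h2
  have hq : 2 * (d * t) = r ^ 2 - k := by linear_combination (d + t - g + r) * h1 - h3
  have hdt : |d * t| ≤ |r ^ 2 - k| := by
    have : |2 * (d * t)| = |r ^ 2 - k| := by rw [hq]
    rw [abs_mul] at this
    simp only [abs_two] at this
    have h0 := abs_nonneg (d * t)
    omega
  have key : ∀ u v x y : ℤ, 1 ≤ u → x * y = d * t → u * x + v * y = r * a * b → |x| ≤ B := by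
    intro u v x y hu hxy hxl
    rcases eq_or_ne (x * y) 0 with h0 | h0
    · rcases mul_eq_zero.mp h0 with hx0 | hy0
      · simp [hx0]; exact hB0
      · have hax : u * x = r * a * b := by rw [hy0] at hxl; linarith
        have h1' : |u| * |x| = |r * a * b| := by rw [← abs_mul, hax]
        have ha' : 1 ≤ |u| := by rw [abs_of_pos (by linarith : (0:ℤ) < u)]; exact hu
        have hx' : |x| ≤ |u| * |x| :=
          le_mul_of_one_le_left (abs_nonneg _) ha'
        have := abs_nonneg (r ^ 2 - k)
        omega
    · have hy0 : y ≠ 0 := fun h => h0 (by simp [h])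
      have hy1 : 1 ≤ |y| := Int.one_le_abs hy0
      have : |x| ≤ |x * y| := by
        rw [abs_mul]
        exact le_mul_of_one_le_right (abs_nonneg _) hy1
      rw [hxy] at this
      have h4 := hdt
      have h5 := abs_nonneg (r * a * b)
      omega
  have hd : |d| ≤ B := key a b d t ha rfl hl
  have ht : |t| ≤ B := key b a t d hb (mul_comm t d) (by linarith)
  have hg : |g| ≤ 2 * B + |r| := by
    have hg' : g = d + t - r := by linarith
    have h1 := abs_sub_abs_le_abs_sub (d + t) r
    have h2 := abs_add_le d t
    have h3 := abs_sub (d + t) r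
    calc |g| = |d + t - r| := by rw [hg']
      _ ≤ |d + t| + |r| := abs_sub _ _
      _ ≤ |d| + |t| + |r| := by linarith
      _ ≤ 2 * B + |r| := by linarith
  rw [abs_le] at hg hd ht
  simp only [Set.mem_prod, Set.mem_Icc]
  exact ⟨hg, hd, ht⟩
end

section
/- Let a, b, c, d, r, k be integers with b ≤ −1, c ≤ −1, d ≤ −1, a + b + c ≥ 1, a + b + d ≥ 1, and a + c + d ≥ 1. Then the set of tuples (α, β, γ, δ, ε) ∈ ℤ⁵ satisfying the three equations: (1) 2(δ + ε) − α − β − γ = r; (2) (a² − a + b − b² − c − c² − d − d²)·α + (a² − a − b − b² + c − c² − d − d²)·β + (a² − a − b − b² − c − c² + d − d²)·γ = 2(a² − 2a − b − b² − c − c² − d − d²)·δ + 2(a² − a − b² − c² − d²)·ε; (3) α² + β² + γ² + δ² + ε² − αδ − αε − βδ − βε − γδ − γε = k; is finite. -/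
set_option maxHeartbeats 1600000

private lemma cs_aux (D1 D2 D3 A t X1 X2 X3 : ℤ) :
    (2*(D1*X1+D2*X2+D3*X3)+9*A*t)^2 ≤
      (2*(D1^2+D2^2+D3^2)+9*A^2)*(2*(X1^2+X2^2+X3^2)+9*t^2) := by
  nlinarith [sq_nonneg (D1*X2-D2*X1), sq_nonneg (D1*X3-D3*X1), sq_nonneg (D2*X3-D3*X2),
    sq_nonneg (D1*t-A*X1), sq_nonneg (D2*t-A*X2), sq_nonneg (D3*t-A*X3)]

private lemma quad_aux (M N G e s r k : ℤ) (he : 1 ≤ e) (hG : G = 3*M^2 - 18*e)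
    (h5 : (3*r*N - 3*M*s)^2 ≤ G*(18*k+3*s^2+6*r*s-6*r^2)) :
    18*s^2 ≤ (2*G+6*M*N)*r*s + (6*G*k - 2*G*r^2 - 3*r^2*N^2) := by
  nlinarith [mul_nonneg (by linarith : (0:ℤ) ≤ e - 1) (sq_nonneg s)]

private lemma abs_le_sq_int (t : ℤ) : |t| ≤ t^2 := by
  rcases eq_or_ne t 0 with h | h
  · simp [h]
  · nlinarith [Int.one_le_abs h, sq_abs t, abs_nonneg t]

private lemma bound_from_quad (s B C : ℤ) (h : 18*s^2 ≤ B*s + C) : |s| ≤ |B| + |C| := by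
  rcases eq_or_ne s 0 with h0 | h0
  · simp [h0]; positivity
  · have h1 : 1 ≤ |s| := Int.one_le_abs h0
    have h2 : B*s ≤ |B| * |s| := by
      calc B*s ≤ |B*s| := le_abs_self _
        _ = |B| * |s| := abs_mul B s
    have h3 : C ≤ |C| * |s| := le_trans (le_abs_self C) (le_mul_of_one_le_right (abs_nonneg C) h1)
    nlinarith [sq_abs s, abs_nonneg s]

/-- On the sextic del Pezzo `X₃` with ample polarization `H = aℓ + bℓ₁ + cℓ₂ + dℓ₃`,
the system satisfied by the dimension vector `(α, β, γ, δ, ε)` of the `K₃,₂`-quiver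
representation of an Ulrich bundle of rank `r` has finitely many integer solutions. -/
theorem x3_dimension_vectors_finite (a b c d r k : ℤ)
    (hb : b ≤ -1) (hc : c ≤ -1) (hd : d ≤ -1)
    (habc : 1 ≤ a + b + c) (habd : 1 ≤ a + b + d) (hacd : 1 ≤ a + c + d) :
    {v : ℤ × ℤ × ℤ × ℤ × ℤ |
      2 * (v.2.2.2.1 + v.2.2.2.2) - v.1 - v.2.1 - v.2.2.1 = r ∧
      (a ^ 2 - a + b - b ^ 2 - c - c ^ 2 - d - d ^ 2) * v.1 +
        (a ^ 2 - a - b - b ^ 2 + c - c ^ 2 - d - d ^ 2) * v.2.1 +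
        (a ^ 2 - a - b - b ^ 2 - c - c ^ 2 + d - d ^ 2) * v.2.2.1 =
      2 * (a ^ 2 - 2 * a - b - b ^ 2 - c - c ^ 2 - d - d ^ 2) * v.2.2.2.1 +
        2 * (a ^ 2 - a - b ^ 2 - c ^ 2 - d ^ 2) * v.2.2.2.2 ∧
      v.1 ^ 2 + v.2.1 ^ 2 + v.2.2.1 ^ 2 + v.2.2.2.1 ^ 2 + v.2.2.2.2 ^ 2
        - v.1 * v.2.2.2.1 - v.1 * v.2.2.2.2 - v.2.1 * v.2.2.2.1 - v.2.1 * v.2.2.2.2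
        - v.2.2.1 * v.2.2.2.1 - v.2.2.1 * v.2.2.2.2 = k}.Finite := by
  have he : 1 ≤ a^2 - b^2 - c^2 - d^2 := by
    nlinarith [mul_nonneg (by linarith : (0:ℤ) ≤ a+b+c-1) (by linarith : (0:ℤ) ≤ a+b+d-1),
      mul_nonneg (by linarith : (0:ℤ) ≤ a+b+c-1) (by linarith : (0:ℤ) ≤ a+c+d-1),
      mul_nonneg (by linarith : (0:ℤ) ≤ a+b+d-1) (by linarith : (0:ℤ) ≤ a+c+d-1),
      mul_nonneg (by linarith : (0:ℤ) ≤ -1-b) (by linarith : (0:ℤ) ≤ -1-c),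
      mul_nonneg (by linarith : (0:ℤ) ≤ -1-b) (by linarith : (0:ℤ) ≤ -1-d),
      mul_nonneg (by linarith : (0:ℤ) ≤ -1-c) (by linarith : (0:ℤ) ≤ -1-d)]
  obtain ⟨M, hM⟩ : ∃ x : ℤ, x = 3*a + b + c + d := ⟨_, rfl⟩
  obtain ⟨N, hN⟩ : ∃ x : ℤ, x = 3*a^2 - 3*a - (3*b^2+b) - (3*c^2+c) - (3*d^2+d) := ⟨_, rfl⟩
  obtain ⟨G, hGdef⟩ : ∃ x : ℤ, x = 3*M^2 - 18*(a^2 - b^2 - c^2 - d^2) := ⟨_, rfl⟩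
  obtain ⟨B1, hB1⟩ : ∃ x : ℤ, x = (2*G + 6*M*N)*r := ⟨_, rfl⟩
  obtain ⟨C0, hC0⟩ : ∃ x : ℤ, x = 6*G*k - 2*G*r^2 - 3*r^2*N^2 := ⟨_, rfl⟩
  obtain ⟨K, hKdef⟩ : ∃ x : ℤ, x = |B1| + |C0| := ⟨_, rfl⟩
  obtain ⟨K2, hK2def⟩ : ∃ x : ℤ, x = 18*|k| + 3*K^2 + 6 * |r| * K := ⟨_, rfl⟩
  obtain ⟨KB, hKBdef⟩ : ∃ x : ℤ, x = K2 + 2*K + |r| := ⟨_, rfl⟩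
  have hK0 : 0 ≤ K := by rw [hKdef]; positivity
  have hK20 : 0 ≤ K2 := by rw [hK2def]; positivity
  have hKB0 : 0 ≤ KB := by rw [hKBdef]; positivity
  refine Set.Finite.subset ((Set.finite_Icc (-KB) KB).prod ((Set.finite_Icc (-KB) KB).prod
    ((Set.finite_Icc (-KB) KB).prod ((Set.finite_Icc (-KB) KB).prod
      (Set.finite_Icc (-KB) KB))))) ?_
  rintro ⟨α, β, γ, δ, ε⟩ hv
  simp only [Set.mem_setOf_eq] at hv
  obtain ⟨h1, h2, h3⟩ := hv
  have hA : 2*((2*α-β-γ)^2 + (2*β-α-γ)^2 + (2*γ-α-β)^2) + 9*(δ-ε)^2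
      = 18*k + 3*(δ+ε)^2 + 6*r*(δ+ε) - 6*r^2 := by
    linear_combination 18*h3 + (6*(α+β+γ) - 6*(δ+ε) - 6*r)*h1
  have hB : 2*((2*b-c-d)*(2*α-β-γ) + (2*c-b-d)*(2*β-α-γ) + (2*d-b-c)*(2*γ-α-β))
      + 9*(a+b+c+d)*(δ-ε) = 3*r*N - 3*M*(δ+ε) := by
    rw [hN, hM]
    linear_combination 9*h2 + (3*(3*a^2 - 3*a - (3*b^2+b) - (3*c^2+c) - (3*d^2+d)))*h1
  have hGA : 2*((2*b-c-d)^2 + (2*c-b-d)^2 + (2*d-b-c)^2) + 9*(a+b+c+d)^2 = G := by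
    rw [hGdef, hM]; ring
  have h5 : (3*r*N - 3*M*(δ+ε))^2 ≤ G*(18*k + 3*(δ+ε)^2 + 6*r*(δ+ε) - 6*r^2) := by
    rw [← hB, ← hGA, ← hA]
    exact cs_aux _ _ _ _ _ _ _ _
  have hs18 : 18*(δ+ε)^2 ≤ B1*(δ+ε) + C0 := by
    rw [hB1, hC0]
    exact quad_aux M N G (a^2-b^2-c^2-d^2) (δ+ε) r k he hGdef h5
  have hsK : |δ+ε| ≤ K := by rw [hKdef]; exact bound_from_quad _ _ _ hs18
  have h6 : (δ+ε)^2 ≤ K^2 := by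
    have := pow_le_pow_left₀ (abs_nonneg (δ+ε)) hsK 2
    rwa [sq_abs] at this
  have h7 : r*(δ+ε) ≤ |r| * K := by
    calc r*(δ+ε) ≤ |r*(δ+ε)| := le_abs_self _
      _ = |r| * |δ+ε| := abs_mul _ _
      _ ≤ |r| * K := mul_le_mul_of_nonneg_left hsK (abs_nonneg r)
  have hup : 2*((2*α-β-γ)^2 + (2*β-α-γ)^2 + (2*γ-α-β)^2) + 9*(δ-ε)^2 ≤ K2 := by
    rw [hK2def]
    linarith [hA, h6, h7, le_abs_self k, sq_nonneg r]
  have htK : |δ-ε| ≤ K2 := by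
    refine le_trans (abs_le_sq_int _) ?_
    linarith [hup, sq_nonneg (2*α-β-γ), sq_nonneg (2*β-α-γ), sq_nonneg (2*γ-α-β),
      sq_nonneg (δ-ε)]
  have hX1K : |2*α-β-γ| ≤ K2 := by
    refine le_trans (abs_le_sq_int _) ?_
    linarith [hup, sq_nonneg (2*β-α-γ), sq_nonneg (2*γ-α-β), sq_nonneg (δ-ε),
      sq_nonneg (2*α-β-γ)]
  have hX2K : |2*β-α-γ| ≤ K2 := by
    refine le_trans (abs_le_sq_int _) ?_
    linarith [hup, sq_nonneg (2*α-β-γ), sq_nonneg (2*γ-α-β), sq_nonneg (δ-ε),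
      sq_nonneg (2*β-α-γ)]
  have hX3K : |2*γ-α-β| ≤ K2 := by
    refine le_trans (abs_le_sq_int _) ?_
    linarith [hup, sq_nonneg (2*α-β-γ), sq_nonneg (2*β-α-γ), sq_nonneg (δ-ε),
      sq_nonneg (2*γ-α-β)]
  have eX1 := abs_le.mp hX1K
  have eX2 := abs_le.mp hX2K
  have eX3 := abs_le.mp hX3K
  have es := abs_le.mp hsK
  have et := abs_le.mp htK
  have er1 := le_abs_self r
  have er2 := neg_abs_le r
  simp only [Set.mem_prod, Set.mem_Icc]
  refine ⟨⟨?_, ?_⟩, ⟨?_, ?_⟩, ⟨?_, ?_⟩, ⟨?_, ?_⟩, ?_, ?_⟩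
  · linarith [hKB0, eX1.1, es.1, er2, hKBdef.le, hKBdef.ge]
  · linarith [hKB0, eX1.2, es.2, er1, hKBdef.le, hKBdef.ge]
  · linarith [hKB0, eX2.1, es.1, er2, hKBdef.le, hKBdef.ge]
  · linarith [hKB0, eX2.2, es.2, er1, hKBdef.le, hKBdef.ge]
  · linarith [hKB0, eX3.1, es.1, er2, hKBdef.le, hKBdef.ge]
  · linarith [hKB0, eX3.2, es.2, er1, hKBdef.le, hKBdef.ge]
  · linarith [hKB0, es.1, et.1, hK0, hKBdef.le, hKBdef.ge, abs_nonneg r]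
  · linarith [hKB0, es.2, et.2, hK0, hKBdef.le, hKBdef.ge, abs_nonneg r]
  · linarith [hKB0, es.1, et.2, hK0, hKBdef.le, hKBdef.ge, abs_nonneg r]
  · linarith [hKB0, es.2, et.1, hK0, hKBdef.le, hKBdef.ge, abs_nonneg r]
end

section
/- Let a, b, c, d, e be real numbers with a² > b² + c² + d² + e², and let α, β, γ, δ, ε, ζ be real numbers satisfying 3ζ = α + β + γ + δ + ε, α² + β² + γ² + δ² + ε² + ζ² = ζ·(α + β + γ + δ + ε), and (−b − c − d + 2e)·α + (−b − c + 2d − e)·β + (−b + 2c − d − e)·γ + (2b − c − d − e)·δ + (3a + 2(b + c + d + e))·ε = 0. Then α = β = γ = δ = ε = ζ = 0. -/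
set_option maxHeartbeats 1000000 in
/-- Constrained Cauchy–Schwarz step, in abstract variables. -/
lemma x4_aux_cs (w1 w2 w3 w4 w5 u1 u2 u3 u4 u5 ζ : ℝ)
    (hsum : u1 + u2 + u3 + u4 + u5 = 0)
    (hnorm : u1^2 + u2^2 + u3^2 + u4^2 + u5^2 = 5*ζ^2)
    (hdot : w1*u1 + w2*u2 + w3*u3 + w4*u4 + w5*u5 = -3*ζ*(w1 + w2 + w3 + w4 + w5)) :
    ζ^2*(2*(w1 + w2 + w3 + w4 + w5)^2 - (w1^2 + w2^2 + w3^2 + w4^2 + w5^2)) ≤ 0 := by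
  have main : 125*(ζ^2*(2*(w1 + w2 + w3 + w4 + w5)^2 - (w1^2 + w2^2 + w3^2 + w4^2 + w5^2))) + (((5*w1 - (w1 + w2 + w3 + w4 + w5))*u2 - (5*w2 - (w1 + w2 + w3 + w4 + w5))*u1)^2 + ((5*w1 - (w1 + w2 + w3 + w4 + w5))*u3 - (5*w3 - (w1 + w2 + w3 + w4 + w5))*u1)^2 + ((5*w1 - (w1 + w2 + w3 + w4 + w5))*u4 - (5*w4 - (w1 + w2 + w3 + w4 + w5))*u1)^2 + ((5*w1 - (w1 + w2 + w3 + w4 + w5))*u5 - (5*w5 - (w1 + w2 + w3 + w4 + w5))*u1)^2 + ((5*w2 - (w1 + w2 + w3 + w4 + w5))*u3 - (5*w3 - (w1 + w2 + w3 + w4 + w5))*u2)^2 + ((5*w2 - (w1 + w2 + w3 + w4 + w5))*u4 - (5*w4 - (w1 + w2 + w3 + w4 + w5))*u2)^2 + ((5*w2 - (w1 + w2 + w3 + w4 + w5))*u5 - (5*w5 - (w1 + w2 + w3 + w4 + w5))*u2)^2 + ((5*w3 - (w1 + w2 + w3 + w4 + w5))*u4 - (5*w4 - (w1 + w2 + w3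 + w4 + w5))*u3)^2 + ((5*w3 - (w1 + w2 + w3 + w4 + w5))*u5 - (5*w5 - (w1 + w2 + w3 + w4 + w5))*u3)^2 + ((5*w4 - (w1 + w2 + w3 + w4 + w5))*u5 - (5*w5 - (w1 + w2 + w3 + w4 + w5))*u4)^2) = 0 := by
    linear_combination ((5*w1 - (w1 + w2 + w3 + w4 + w5))^2 + (5*w2 - (w1 + w2 + w3 + w4 + w5))^2 + (5*w3 - (w1 + w2 + w3 + w4 + w5))^2 + (5*w4 - (w1 + w2 + w3 + w4 + w5))^2 + (5*w5 - (w1 + w2 + w3 + w4 + w5))^2)*hnorm + (15*ζ*(w1 + w2 + w3 + w4 + w5) - ((5*w1 - (w1 + w2 + w3 + w4 + w5))*u1 + (5*w2 - (w1 + w2 + w3 + w4 + w5))*u2 + (5*w3 - (w1 + w2 + w3 + w4 + w5))*u3 + (5*w4 - (w1 + w2 + w3 + w4 + w5))*u4 + (5*w5 - (w1 + w2 + w3 + w4 + w5))*u5))*((5:ℝ)*hdot - (w1 + w2 + w3 + w4 + w5)*hsum)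
  have hL : (0:ℝ) ≤ ((5*w1 - (w1 + w2 + w3 + w4 + w5))*u2 - (5*w2 - (w1 + w2 + w3 + w4 + w5))*u1)^2 + ((5*w1 - (w1 + w2 + w3 + w4 + w5))*u3 - (5*w3 - (w1 + w2 + w3 + w4 + w5))*u1)^2 + ((5*w1 - (w1 + w2 + w3 + w4 + w5))*u4 - (5*w4 - (w1 + w2 + w3 + w4 + w5))*u1)^2 + ((5*w1 - (w1 + w2 + w3 + w4 + w5))*u5 - (5*w5 - (w1 + w2 + w3 + w4 + w5))*u1)^2 + ((5*w2 - (w1 + w2 + w3 + w4 + w5))*u3 - (5*w3 - (w1 + w2 + w3 + w4 + w5))*u2)^2 + ((5*w2 - (w1 + w2 + w3 + w4 + w5))*u4 - (5*w4 - (w1 + w2 + w3 + w4 + w5))*u2)^2 + ((5*w2 - (w1 + w2 + w3 + w4 + w5))*u5 - (5*w5 - (w1 + w2 + w3 + w4 + w5))*u2)^2 + ((5*w3 - (w1 + w2 + w3 + w4 + w5))*u4 - (5*w4 - (w1 + w2 + w3 + w4 + w5))*u3)^2 + ((5*w3 - (w1 + w2 + w3 + w4 + w5))*u5 - (5*w5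 - (w1 + w2 + w3 + w4 + w5))*u3)^2 + ((5*w4 - (w1 + w2 + w3 + w4 + w5))*u5 - (5*w5 - (w1 + w2 + w3 + w4 + w5))*u4)^2 := by positivity
  linarith

set_option maxHeartbeats 1000000 in
/-- Homogenized system for the Ulrich trichotomy on the quintic del Pezzo `X₄`:
if `a² > b² + c² + d² + e²`, the system has only the trivial real solution. -/
theorem x4_homogenized_system_trivial (a b c d e : ℝ)
    (hample : b ^ 2 + c ^ 2 + d ^ 2 + e ^ 2 < a ^ 2)
    (α β γ δ ε ζ : ℝ)
    (h1 : 3 * ζ = α + β + γ + δ + ε)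
    (h2 : α ^ 2 + β ^ 2 + γ ^ 2 + δ ^ 2 + ε ^ 2 + ζ ^ 2 = ζ * (α + β + γ + δ + ε))
    (h3 : (-b - c - d + 2 * e) * α + (-b - c + 2 * d - e) * β + (-b + 2 * c - d - e) * γ
      + (2 * b - c - d - e) * δ + (3 * a + 2 * (b + c + d + e)) * ε = 0) :
    α = 0 ∧ β = 0 ∧ γ = 0 ∧ δ = 0 ∧ ε = 0 ∧ ζ = 0 := by
  have hsum : (5*α - 3*ζ) + (5*β - 3*ζ) + (5*γ - 3*ζ) + (5*δ - 3*ζ) + (5*ε - 3*ζ) = 0 := by linear_combination (-5 : ℝ)*h1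
  have hnorm : (5*α - 3*ζ)^2 + (5*β - 3*ζ)^2 + (5*γ - 3*ζ)^2 + (5*δ - 3*ζ)^2 + (5*ε - 3*ζ)^2 = 5*ζ^2 := by linear_combination 25*h2 + 5*ζ*h1
  have hdot : (-b - c - d + 2*e)*(5*α - 3*ζ) + (-b - c + 2*d - e)*(5*β - 3*ζ) + (-b + 2*c - d - e)*(5*γ - 3*ζ) + (2*b - c - d - e)*(5*δ - 3*ζ) + (3*a + 2*(b + c + d + e))*(5*ε - 3*ζ) = -3*ζ*((-b - c - d + 2*e) + (-b - c + 2*d - e) + (-b + 2*c - d - e) + (2*b - c - d - e) + (3*a + 2*(b + c + d + e))) := by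
    linear_combination (5 : ℝ)*h3
  have key := x4_aux_cs (-b - c - d + 2*e) (-b - c + 2*d - e) (-b + 2*c - d - e) (2*b - c - d - e) (3*a + 2*(b + c + d + e)) (5*α - 3*ζ) (5*β - 3*ζ) (5*γ - 3*ζ) (5*δ - 3*ζ) (5*ε - 3*ζ) ζ hsum hnorm hdot
  have key2 : ζ^2 * (9*(a^2 - (b^2 + c^2 + d^2 + e^2))) ≤ 0 := by
    have hring : ζ^2 * (9*(a^2 - (b^2 + c^2 + d^2 + e^2))) = ζ^2*(2*((-b - c - d + 2*e) + (-b - c + 2*d - e) + (-b + 2*c - d - e) + (2*b - c - d - e) + (3*a + 2*(b + c + d + e)))^2 - ((-b - c - d + 2*e)^2 + (-b - c + 2*d - e)^2 + (-b + 2*c - d - e)^2 + (2*b - c - d - e)^2 + (3*a + 2*(b + c + d + e))^2)) := by ring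
    rw [hring]; exact key
  clear key hdot h3
  have hz2 : ζ^2 = 0 := by nlinarith [sq_nonneg ζ]
  have hz : ζ = 0 := pow_eq_zero_iff two_ne_zero |>.mp hz2
  subst hz
  have hα : α^2 = 0 := by nlinarith [sq_nonneg β, sq_nonneg γ, sq_nonneg δ, sq_nonneg ε]
  have hβ : β^2 = 0 := by nlinarith [sq_nonneg α, sq_nonneg γ, sq_nonneg δ, sq_nonneg ε]
  have hγ : γ^2 = 0 := by nlinarith [sq_nonneg β, sq_nonneg α, sq_nonneg δ, sq_nonneg ε]
  have hδ : δ^2 = 0 := by nlinarith [sq_nonneg β, sq_nonneg γ, sq_nonneg α, sq_nonneg ε]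
  have hε : ε^2 = 0 := by nlinarith [sq_nonneg β, sq_nonneg γ, sq_nonneg δ, sq_nonneg α]
  exact ⟨pow_eq_zero_iff two_ne_zero |>.mp hα, pow_eq_zero_iff two_ne_zero |>.mp hβ,
    pow_eq_zero_iff two_ne_zero |>.mp hγ, pow_eq_zero_iff two_ne_zero |>.mp hδ,
    pow_eq_zero_iff two_ne_zero |>.mp hε, rfl⟩
end

section
/- Let a, b, c, d, e, r, k be integers with b ≤ −1, c ≤ −1, d ≤ −1, e ≤ −1, a + b + c ≥ 1, a + b + d ≥ 1, a + b + e ≥ 1, a + c + d ≥ 1, a + c + e ≥ 1, and a + d + e ≥ 1. Write Σ = b + c + d + e and Σ₂ = b² + c² + d² + e². Then the set of tuples (α, β, γ, δ, ε, ζ) ∈ ℤ⁶ satisfying the three equations: (1) 3ζ − α − β − γ − δ − ε = r; (2) (a² − a − Σ − Σ₂ + 2e)·α + (a² − a − Σ − Σ₂ + 2d)·β + (a² − a − Σ − Σ₂ + 2c)·γ + (a² − a − Σ − Σ₂ + 2b)·δ + (a² + a + Σ − Σ₂)·ε = (3a² − 3a − Σ − 3Σ₂)·ζ; (3) α² + β²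 + γ² + δ² + ε² + ζ² − ζ·(α + β + γ + δ + ε) = k; is finite. -/
private lemma cs5 (d1 d2 d3 d4 d5 u1 u2 u3 u4 u5 : ℤ) :
    (d1*u1+d2*u2+d3*u3+d4*u4+d5*u5) ^ 2 ≤
      (d1^2+d2^2+d3^2+d4^2+d5^2) * (u1^2+u2^2+u3^2+u4^2+u5^2) := by
  nlinarith [sq_nonneg (d1*u2-d2*u1), sq_nonneg (d1*u3-d3*u1), sq_nonneg (d1*u4-d4*u1),
    sq_nonneg (d1*u5-d5*u1), sq_nonneg (d2*u3-d3*u2), sq_nonneg (d2*u4-d4*u2),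
    sq_nonneg (d2*u5-d5*u2), sq_nonneg (d3*u4-d4*u3), sq_nonneg (d3*u5-d5*u3),
    sq_nonneg (d4*u5-d5*u4)]

private lemma abs_le_sq (x : ℤ) : |x| ≤ x ^ 2 := by
  rcases eq_or_ne x 0 with h | h
  · simp [h]
  · have h1 : 1 ≤ |x| := by
      rcases lt_or_gt_of_ne h with hl | hl
      · rw [abs_of_neg hl]; omega
      · rw [abs_of_pos hl]; omega
    nlinarith [sq_abs x, mul_nonneg (by linarith : (0:ℤ) ≤ |x| - 1) (abs_nonneg x)]

private lemma zbound (A B z : ℤ) (h : 500 * z ^ 2 ≤ A * z + B) : |z| ≤ |A| + |B| := by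
  by_contra hcon
  push_neg at hcon
  have h1 : |A| + |B| + 1 ≤ |z| := Int.add_one_le_iff.mpr hcon
  have hz1 : 1 ≤ |z| := by
    have := abs_nonneg A; have := abs_nonneg B; linarith
  have e1 : A * z ≤ |A| * |z| := by rw [← abs_mul]; exact le_abs_self _
  have e2 : B ≤ |B| := le_abs_self B
  have e3 : |B| ≤ |B| * |z| := le_mul_of_one_le_right (abs_nonneg B) hz1
  have e4 : (|A| + |B| + 1) * |z| ≤ |z| * |z| := mul_le_mul_of_nonneg_right h1 (abs_nonneg z)
  have e5 : |z| * |z| = z ^ 2 := by rw [abs_mul_abs_self]; ring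
  nlinarith [sq_nonneg z]

private lemma finite_of_bounded (S : Set (ℤ × ℤ × ℤ × ℤ × ℤ × ℤ)) (N : ℤ)
    (h : ∀ v ∈ S, |v.1| ≤ N ∧ |v.2.1| ≤ N ∧ |v.2.2.1| ≤ N ∧ |v.2.2.2.1| ≤ N ∧
      |v.2.2.2.2.1| ≤ N ∧ |v.2.2.2.2.2| ≤ N) : S.Finite := by
  apply Set.Finite.subset (Set.finite_Icc (-N, -N, -N, -N, -N, -N) (N, N, N, N, N, N))
  rintro ⟨y1, y2, y3, y4, y5, y6⟩ hv
  obtain ⟨h1, h2, h3, h4, h5, h6⟩ := h _ hv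
  rw [abs_le] at h1 h2 h3 h4 h5 h6
  simp only [Set.mem_Icc, Prod.mk_le_mk]
  exact ⟨⟨h1.1, h2.1, h3.1, h4.1, h5.1, h6.1⟩, h1.2, h2.2, h3.2, h4.2, h5.2, h6.2⟩


set_option maxHeartbeats 4000000 in
/-- On the quintic del Pezzo `X₄` with ample polarization
`H = aℓ + bℓ₁ + cℓ₂ + dℓ₃ + eℓ₄`, the system satisfied by the dimension vector
`(α, β, γ, δ, ε, ζ)` of the `K₅,₁`-quiver representation of an Ulrich bundle of rank
`r` has finitely many integer solutions. Here `Σ = b + c + d + e` and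
`Σ₂ = b² + c² + d² + e²`. -/
theorem x4_dimension_vectors_finite (a b c d e r k : ℤ)
    (hb : b ≤ -1) (hc : c ≤ -1) (hd : d ≤ -1) (he : e ≤ -1)
    (habc : 1 ≤ a + b + c) (habd : 1 ≤ a + b + d) (habe : 1 ≤ a + b + e)
    (hacd : 1 ≤ a + c + d) (hace : 1 ≤ a + c + e) (hade : 1 ≤ a + d + e) :
    {v : ℤ × ℤ × ℤ × ℤ × ℤ × ℤ |
      3 * v.2.2.2.2.2 - v.1 - v.2.1 - v.2.2.1 - v.2.2.2.1 - v.2.2.2.2.1 = r ∧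
      (a ^ 2 - a - (b + c + d + e) - (b ^ 2 + c ^ 2 + d ^ 2 + e ^ 2) + 2 * e) * v.1 +
        (a ^ 2 - a - (b + c + d + e) - (b ^ 2 + c ^ 2 + d ^ 2 + e ^ 2) + 2 * d) * v.2.1 +
        (a ^ 2 - a - (b + c + d + e) - (b ^ 2 + c ^ 2 + d ^ 2 + e ^ 2) + 2 * c) * v.2.2.1 +
        (a ^ 2 - a - (b + c + d + e) - (b ^ 2 + c ^ 2 + d ^ 2 + e ^ 2) + 2 * b) * v.2.2.2.1 +
        (a ^ 2 + a + (b + c + d + e) - (b ^ 2 + c ^ 2 + d ^ 2 + e ^ 2)) * v.2.2.2.2.1 =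
      (3 * a ^ 2 - 3 * a - (b + c + d + e) - 3 * (b ^ 2 + c ^ 2 + d ^ 2 + e ^ 2)) *
        v.2.2.2.2.2 ∧
      v.1 ^ 2 + v.2.1 ^ 2 + v.2.2.1 ^ 2 + v.2.2.2.1 ^ 2 + v.2.2.2.2.1 ^ 2 +
        v.2.2.2.2.2 ^ 2 -
        v.2.2.2.2.2 * (v.1 + v.2.1 + v.2.2.1 + v.2.2.2.1 + v.2.2.2.2.1) = k}.Finite := by
  have hG1 : 1 ≤ a ^ 2 - (b ^ 2 + c ^ 2 + d ^ 2 + e ^ 2) := by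
    have t1 : (0:ℤ) ≤ (-b) * (a + b + c - 1) :=
      mul_nonneg (by linarith) (by linarith)
    have t2 : (0:ℤ) ≤ (-c) * (a + c + d - 1) :=
      mul_nonneg (by linarith) (by linarith)
    have t3 : (0:ℤ) ≤ (-d) * (a + d + e - 1) :=
      mul_nonneg (by linarith) (by linarith)
    have t4 : (0:ℤ) ≤ (-e) * (a + b + e - 1) :=
      mul_nonneg (by linarith) (by linarith)
    have t5 : (0:ℤ) ≤ (a + b + d - 1) * (a + c + e - 1) :=
      mul_nonneg (by linarith) (by linarith)
    nlinarith only [t1, t2, t3, t4, t5, hb, hc, hd, he, habc, habd, habe, hacd, hace, hade]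
  refine finite_of_bounded _ ((|(100 * (3 * a + (b + c + d + e)) * (r * (5 * (a ^ 2 - a - (b + c + d + e) - (b ^ 2 + c ^ 2 + d ^ 2 + e ^ 2)) + 2 * a + 4 * (b + c + d + e))) + 20 * ((5 * e - (a + 2 * (b + c + d + e))) ^ 2 + (5 * d - (a + 2 * (b + c + d + e))) ^ 2 + (5 * c - (a + 2 * (b + c + d + e))) ^ 2 + (5 * b - (a + 2 * (b + c + d + e))) ^ 2 + (5 * (a + (b + c + d + e)) - (a + 2 * (b + c + d + e))) ^ 2) * r)| + |(100 * ((5 * e - (a + 2 * (b + c + d + e))) ^ 2 + (5 * d - (a + 2 * (b + c + d + e))) ^ 2 + (5 * c - (a + 2 * (b + c + d + e))) ^ 2 + (5 * b - (a + 2 * (b + c + d + e))) ^ 2 + (5 * (a + (b + c + d + e)) - (a + 2 * (b + c + d + e))) ^ 2) * k - 20 * ((5 * e - (a + 2 * (b + c + d + e))) ^ 2 + (5 * d - (a + 2 * (b + c + d + e))) ^ 2 + (5 * c - (a + 2 * (b + c + d + e))) ^ 2 + (5 * b - (a + 2 * (b + c + d + e))) ^ 2 + (5 * (a + (b + c + d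 + e)) - (a + 2 * (b + c + d + e))) ^ 2) * r ^ 2 - 25 * (r * (5 * (a ^ 2 - a - (b + c + d + e) - (b ^ 2 + c ^ 2 + d ^ 2 + e ^ 2)) + 2 * a + 4 * (b + c + d + e))) ^ 2)|) + (|k| + 2 * (|(100 * (3 * a + (b + c + d + e)) * (r * (5 * (a ^ 2 - a - (b + c + d + e) - (b ^ 2 + c ^ 2 + d ^ 2 + e ^ 2)) + 2 * a + 4 * (b + c + d + e))) + 20 * ((5 * e - (a + 2 * (b + c + d + e))) ^ 2 + (5 * d - (a + 2 * (b + c + d + e))) ^ 2 + (5 * c - (a + 2 * (b + c + d + e))) ^ 2 + (5 * b - (a + 2 * (b + c + d + e))) ^ 2 + (5 * (a + (b + c + d + e)) - (a + 2 * (b + c + d + e))) ^ 2) * r)| + |(100 * ((5 * e - (a + 2 * (b + c + d + e))) ^ 2 + (5 * d - (a + 2 * (b + c + d + e))) ^ 2 + (5 * c - (a + 2 * (b + c + d + e))) ^ 2 + (5 * b - (a + 2 * (b + c + d + e))) ^ 2 + (5 * (a + (b + c + d + e)) - (a + 2 * (b + c + d + e))) ^ 2) * k - 20 * ((5 * e -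 (a + 2 * (b + c + d + e))) ^ 2 + (5 * d - (a + 2 * (b + c + d + e))) ^ 2 + (5 * c - (a + 2 * (b + c + d + e))) ^ 2 + (5 * b - (a + 2 * (b + c + d + e))) ^ 2 + (5 * (a + (b + c + d + e)) - (a + 2 * (b + c + d + e))) ^ 2) * r ^ 2 - 25 * (r * (5 * (a ^ 2 - a - (b + c + d + e) - (b ^ 2 + c ^ 2 + d ^ 2 + e ^ 2)) + 2 * a + 4 * (b + c + d + e))) ^ 2)|) ^ 2 + |r| * (|(100 * (3 * a + (b + c + d + e)) * (r * (5 * (a ^ 2 - a - (b + c + d + e) - (b ^ 2 + c ^ 2 + d ^ 2 + e ^ 2)) + 2 * a + 4 * (b + c + d + e))) + 20 * ((5 * e - (a + 2 * (b + c + d + e))) ^ 2 + (5 * d - (a + 2 * (b + c + d + e))) ^ 2 + (5 * c - (a + 2 * (b + c + d + e))) ^ 2 + (5 * b - (a + 2 * (b + c + d + e))) ^ 2 + (5 * (a + (b + c + d + e)) - (a + 2 * (b + c + d + e))) ^ 2) * r)| + |(100 * ((5 * e - (a + 2 * (b + c + d + e))) ^ 2 + (5 * d - (a + 2 * (b + c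 + d + e))) ^ 2 + (5 * c - (a + 2 * (b + c + d + e))) ^ 2 + (5 * b - (a + 2 * (b + c + d + e))) ^ 2 + (5 * (a + (b + c + d + e)) - (a + 2 * (b + c + d + e))) ^ 2) * k - 20 * ((5 * e - (a + 2 * (b + c + d + e))) ^ 2 + (5 * d - (a + 2 * (b + c + d + e))) ^ 2 + (5 * c - (a + 2 * (b + c + d + e))) ^ 2 + (5 * b - (a + 2 * (b + c + d + e))) ^ 2 + (5 * (a + (b + c + d + e)) - (a + 2 * (b + c + d + e))) ^ 2) * r ^ 2 - 25 * (r * (5 * (a ^ 2 - a - (b + c + d + e) - (b ^ 2 + c ^ 2 + d ^ 2 + e ^ 2)) + 2 * a + 4 * (b + c + d + e))) ^ 2)|))) ?_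
  rintro ⟨x1, x2, x3, x4, x5, z⟩ hv
  simp only [Set.mem_setOf_eq] at hv
  obtain ⟨h1, h2, h3⟩ := hv
  have hcs : ((5 * e - (a + 2 * (b + c + d + e))) * (5 * x1 - (x1 + x2 + x3 + x4 + x5)) + (5 * d - (a + 2 * (b + c + d + e))) * (5 * x2 - (x1 + x2 + x3 + x4 + x5)) + (5 * c - (a + 2 * (b + c + d + e))) * (5 * x3 - (x1 + x2 + x3 + x4 + x5)) + (5 * b - (a + 2 * (b + c + d + e))) * (5 * x4 - (x1 + x2 + x3 + x4 + x5)) + (5 * (a + (b + c + d + e)) - (a + 2 * (b + c + d + e))) * (5 * x5 - (x1 + x2 + x3 + x4 + x5))) ^ 2 ≤ ((5 * e - (a + 2 * (b + c + d + e))) ^ 2 + (5 * d - (a + 2 * (b + c + d + e))) ^ 2 + (5 * c - (a + 2 * (b + c + d + e))) ^ 2 + (5 * b - (a + 2 * (b + c + d + e))) ^ 2 + (5 * (a + (b + c + d + e)) - (a + 2 * (b + c + d + e))) ^ 2) * ((5 * x1 - (x1 + x2 + x3 + x4 + x5)) ^ 2 + (5 * x2 - (x1 + x2 + x3 + x4 +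 x5)) ^ 2 + (5 * x3 - (x1 + x2 + x3 + x4 + x5)) ^ 2 + (5 * x4 - (x1 + x2 + x3 + x4 + x5)) ^ 2 + (5 * x5 - (x1 + x2 + x3 + x4 + x5)) ^ 2) :=
    cs5 (5 * e - (a + 2 * (b + c + d + e))) (5 * d - (a + 2 * (b + c + d + e))) (5 * c - (a + 2 * (b + c + d + e))) (5 * b - (a + 2 * (b + c + d + e))) (5 * (a + (b + c + d + e)) - (a + 2 * (b + c + d + e))) (5 * x1 - (x1 + x2 + x3 + x4 + x5)) (5 * x2 - (x1 + x2 + x3 + x4 + x5)) (5 * x3 - (x1 + x2 + x3 + x4 + x5)) (5 * x4 - (x1 + x2 + x3 + x4 + x5)) (5 * x5 - (x1 + x2 + x3 + x4 + x5))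
  have hA : 2 * ((5 * e - (a + 2 * (b + c + d + e))) * (5 * x1 - (x1 + x2 + x3 + x4 + x5)) + (5 * d - (a + 2 * (b + c + d + e))) * (5 * x2 - (x1 + x2 + x3 + x4 + x5)) + (5 * c - (a + 2 * (b + c + d + e))) * (5 * x3 - (x1 + x2 + x3 + x4 + x5)) + (5 * b - (a + 2 * (b + c + d + e))) * (5 * x4 - (x1 + x2 + x3 + x4 + x5)) + (5 * (a + (b + c + d + e)) - (a + 2 * (b + c + d + e))) * (5 * x5 - (x1 + x2 + x3 + x4 + x5))) = 5 * (r * (5 * (a ^ 2 - a - (b + c + d + e) - (b ^ 2 + c ^ 2 + d ^ 2 + e ^ 2)) + 2 * a + 4 * (b + c + d + e))) - 10 * (3 * a + (b + c + d + e)) * z := by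
    linear_combination 25 * h2 + 5 * (5 * (a ^ 2 - a - (b + c + d + e) - (b ^ 2 + c ^ 2 + d ^ 2 + e ^ 2)) + 2 * a + 4 * (b + c + d + e)) * h1
  have hV : ((5 * x1 - (x1 + x2 + x3 + x4 + x5)) ^ 2 + (5 * x2 - (x1 + x2 + x3 + x4 + x5)) ^ 2 + (5 * x3 - (x1 + x2 + x3 + x4 + x5)) ^ 2 + (5 * x4 - (x1 + x2 + x3 + x4 + x5)) ^ 2 + (5 * x5 - (x1 + x2 + x3 + x4 + x5)) ^ 2) = 5 * z ^ 2 + 5 * r * z + 25 * k - 5 * r ^ 2 := by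
    linear_combination 25 * h3 + 5 * ((x1 + x2 + x3 + x4 + x5) - 2 * z - r) * h1
  have hD0 : (0:ℤ) ≤ ((5 * e - (a + 2 * (b + c + d + e))) ^ 2 + (5 * d - (a + 2 * (b + c + d + e))) ^ 2 + (5 * c - (a + 2 * (b + c + d + e))) ^ 2 + (5 * b - (a + 2 * (b + c + d + e))) ^ 2 + (5 * (a + (b + c + d + e)) - (a + 2 * (b + c + d + e))) ^ 2) := by positivity
  have hid : 5 * (3 * a + (b + c + d + e)) ^ 2 - ((5 * e - (a + 2 * (b + c + d + e))) ^ 2 + (5 * d - (a + 2 * (b + c + d + e))) ^ 2 + (5 * c - (a + 2 * (b + c + d + e))) ^ 2 + (5 * b - (a + 2 * (b + c + d + e))) ^ 2 + (5 * (a + (b + c + d + e)) - (a + 2 * (b + c + d + e))) ^ 2) = 25 * (a ^ 2 - (b ^ 2 + c ^ 2 + d ^ 2 + e ^ 2)) := by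
    ring
  obtain ⟨U, hU⟩ : ∃ U : ℤ, U = ((5 * e - (a + 2 * (b + c + d + e))) * (5 * x1 - (x1 + x2 + x3 + x4 + x5)) + (5 * d - (a + 2 * (b + c + d + e))) * (5 * x2 - (x1 + x2 + x3 + x4 + x5)) + (5 * c - (a + 2 * (b + c + d + e))) * (5 * x3 - (x1 + x2 + x3 + x4 + x5)) + (5 * b - (a + 2 * (b + c + d + e))) * (5 * x4 - (x1 + x2 + x3 + x4 + x5)) + (5 * (a + (b + c + d + e)) - (a + 2 * (b + c + d + e))) * (5 * x5 - (x1 + x2 + x3 + x4 + x5))) := ⟨_, rfl⟩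
  obtain ⟨D, hD⟩ : ∃ D : ℤ, D = ((5 * e - (a + 2 * (b + c + d + e))) ^ 2 + (5 * d - (a + 2 * (b + c + d + e))) ^ 2 + (5 * c - (a + 2 * (b + c + d + e))) ^ 2 + (5 * b - (a + 2 * (b + c + d + e))) ^ 2 + (5 * (a + (b + c + d + e)) - (a + 2 * (b + c + d + e))) ^ 2) := ⟨_, rfl⟩
  obtain ⟨V, hVd⟩ : ∃ V : ℤ, V = ((5 * x1 - (x1 + x2 + x3 + x4 + x5)) ^ 2 + (5 * x2 - (x1 + x2 + x3 + x4 + x5)) ^ 2 + (5 * x3 - (x1 + x2 + x3 + x4 + x5)) ^ 2 + (5 * x4 - (x1 + x2 + x3 + x4 + x5)) ^ 2 + (5 * x5 - (x1 + x2 + x3 + x4 + x5)) ^ 2) := ⟨_, rfl⟩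
  obtain ⟨R, hR⟩ : ∃ R : ℤ, R = (r * (5 * (a ^ 2 - a - (b + c + d + e) - (b ^ 2 + c ^ 2 + d ^ 2 + e ^ 2)) + 2 * a + 4 * (b + c + d + e))) := ⟨_, rfl⟩
  obtain ⟨P, hP⟩ : ∃ P : ℤ, P = (3 * a + (b + c + d + e)) := ⟨_, rfl⟩
  rw [← hU, ← hD, ← hVd] at hcs
  rw [← hU, ← hR, ← hP] at hA
  rw [← hVd] at hV
  rw [← hD] at hD0
  rw [← hP, ← hD] at hid
  have key2 : 500 * z ^ 2 ≤ (100 * P * R + 20 * D * r) * z +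
      (100 * D * k - 20 * D * r ^ 2 - 25 * R ^ 2) := by
    have hA2 : 4 * U ^ 2 = 25 * (R - 2 * P * z) ^ 2 := by
      linear_combination (2 * U + 5 * R - 10 * P * z) * hA
    rw [hV] at hcs
    have key1 : 25 * (R - 2 * P * z) ^ 2 ≤
        4 * D * (5 * z ^ 2 + 5 * r * z + 25 * k - 5 * r ^ 2) := by
      linarith only [hcs, hA2]
    have hid2 : (5 * P ^ 2 - D) * z ^ 2 =
        25 * (a ^ 2 - (b ^ 2 + c ^ 2 + d ^ 2 + e ^ 2)) * z ^ 2 := by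
      linear_combination z ^ 2 * hid
    have hGz : 0 ≤ (a ^ 2 - (b ^ 2 + c ^ 2 + d ^ 2 + e ^ 2) - 1) * z ^ 2 :=
      mul_nonneg (by linarith only [hG1]) (sq_nonneg z)
    linarith only [key1, hid2, hGz]
  rw [hR, hP, hD] at key2
  have hzb : |z| ≤ (|(100 * (3 * a + (b + c + d + e)) * (r * (5 * (a ^ 2 - a - (b + c + d + e) - (b ^ 2 + c ^ 2 + d ^ 2 + e ^ 2)) + 2 * a + 4 * (b + c + d + e))) + 20 * ((5 * e - (a + 2 * (b + c + d + e))) ^ 2 + (5 * d - (a + 2 * (b + c + d + e))) ^ 2 + (5 * c - (a + 2 * (b + c + d + e))) ^ 2 + (5 * b - (a + 2 * (b + c + d + e))) ^ 2 + (5 * (a + (b + c + d + e)) - (a + 2 * (b + c + d + e))) ^ 2) * r)| + |(100 * ((5 * e - (a + 2 * (b + c + d + e))) ^ 2 + (5 * d - (a + 2 * (b + c + d + e))) ^ 2 + (5 * c - (a + 2 * (b + c + d + e))) ^ 2 + (5 * b - (a + 2 * (b + c + d + e))) ^ 2 + (5 * (a + (b + c + d + e)) - (a + 2 * (b + c + d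 + e))) ^ 2) * k - 20 * ((5 * e - (a + 2 * (b + c + d + e))) ^ 2 + (5 * d - (a + 2 * (b + c + d + e))) ^ 2 + (5 * c - (a + 2 * (b + c + d + e))) ^ 2 + (5 * b - (a + 2 * (b + c + d + e))) ^ 2 + (5 * (a + (b + c + d + e)) - (a + 2 * (b + c + d + e))) ^ 2) * r ^ 2 - 25 * (r * (5 * (a ^ 2 - a - (b + c + d + e) - (b ^ 2 + c ^ 2 + d ^ 2 + e ^ 2)) + 2 * a + 4 * (b + c + d + e))) ^ 2)|) := zbound _ _ z key2
  obtain ⟨n1, hn1def⟩ : ∃ n1 : ℤ, n1 = (|(100 * (3 * a + (b + c + d + e)) * (r * (5 * (a ^ 2 - a - (b + c + d + e) - (b ^ 2 + c ^ 2 + d ^ 2 + e ^ 2)) + 2 * a + 4 * (b + c + d + e))) + 20 * ((5 * e - (a + 2 * (b + c + d + e))) ^ 2 + (5 * d - (a + 2 * (b + c + d + e))) ^ 2 + (5 * c - (a + 2 * (b + c + d + e))) ^ 2 + (5 * b - (a + 2 * (b + c + d + e))) ^ 2 + (5 * (a + (b + c + d + e)) - (a + 2 * (b + c + d + e))) ^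 2) * r)| + |(100 * ((5 * e - (a + 2 * (b + c + d + e))) ^ 2 + (5 * d - (a + 2 * (b + c + d + e))) ^ 2 + (5 * c - (a + 2 * (b + c + d + e))) ^ 2 + (5 * b - (a + 2 * (b + c + d + e))) ^ 2 + (5 * (a + (b + c + d + e)) - (a + 2 * (b + c + d + e))) ^ 2) * k - 20 * ((5 * e - (a + 2 * (b + c + d + e))) ^ 2 + (5 * d - (a + 2 * (b + c + d + e))) ^ 2 + (5 * c - (a + 2 * (b + c + d + e))) ^ 2 + (5 * b - (a + 2 * (b + c + d + e))) ^ 2 + (5 * (a + (b + c + d + e)) - (a + 2 * (b + c + d + e))) ^ 2) * r ^ 2 - 25 * (r * (5 * (a ^ 2 - a - (b + c + d + e) - (b ^ 2 + c ^ 2 + d ^ 2 + e ^ 2)) + 2 * a + 4 * (b + c + d + e))) ^ 2)|) := ⟨_, rfl⟩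
  rw [← hn1def] at hzb ⊢
  have hn1 : 0 ≤ n1 := by rw [hn1def]; positivity
  have hzsq : z ^ 2 ≤ n1 ^ 2 := by
    nlinarith only [mul_self_le_mul_self (abs_nonneg z) hzb, sq_abs z, hzb, hn1]
  have hrz : -(r * z) ≤ |r| * n1 := by
    calc -(r * z) ≤ |r * z| := neg_le_abs _
    _ = |r| * |z| := abs_mul r z
    _ ≤ |r| * n1 := mul_le_mul_of_nonneg_left hzb (abs_nonneg r)
  have hsq : x1 ^ 2 + x2 ^ 2 + x3 ^ 2 + x4 ^ 2 + x5 ^ 2 = k + 2 * z ^ 2 - r * z := by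
    linear_combination h3 - z * h1
  have hk := le_abs_self k
  refine ⟨?_, ?_, ?_, ?_, ?_, ?_⟩
  · linarith only [abs_le_sq x1, sq_nonneg x2, sq_nonneg x3, sq_nonneg x4, sq_nonneg x5, hsq, hzsq, hrz, hk, hn1]
  · linarith only [abs_le_sq x2, sq_nonneg x1, sq_nonneg x3, sq_nonneg x4, sq_nonneg x5, hsq, hzsq, hrz, hk, hn1]
  · linarith only [abs_le_sq x3, sq_nonneg x1, sq_nonneg x2, sq_nonneg x4, sq_nonneg x5, hsq, hzsq, hrz, hk, hn1]
  · linarith only [abs_le_sq x4, sq_nonneg x1, sq_nonneg x2, sq_nonneg x3, sq_nonneg x5, hsq, hzsq, hrz, hk, hn1]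
  · linarith only [abs_le_sq x5, sq_nonneg x1, sq_nonneg x2, sq_nonneg x3, sq_nonneg x4, hsq, hzsq, hrz, hk, hn1]
  · linarith only [hzb, abs_nonneg k, sq_nonneg n1, mul_nonneg (abs_nonneg r) hn1]
end
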